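/- arXiv:1509.02203 — 7 statements merged into one kernel-verified Lean document; each statement's English description precedes it below -/
import Mathlib

section
/- Let A be a commutative local ring satisfying Weierstrass division, and let f ∈ A[[t]] reduce modulo the maximal ideal to tⁿ·u(t) with u(t) a unit in k[[t]]. Then there exists a unique monic polynomial q ∈ A[t] of degree n and a unique unit v ∈ A[[t]]ˣ such that f = q·v. Moreover q ≡ tⁿ modulo the maximal ideal. -/
/-
Weierstrass division says that the polynomials of degree `< n` map bijectively onto `A⟦X⟧ ⧸ (f)`.
Writing `Xⁿ ≡ r (mod f)` with `deg r < n` gives a monic `q = Xⁿ - r ∈ (f)` of degree `n`; it is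
unique because the difference of two such polynomials lies in `(f)` and has degree `< n`. Reducing
`q = f * w` modulo the maximal ideal gives `Xⁿ = Xⁿ * ū * w̄`, so `w` is a unit. The unit is unique
because `q` is a non-zero-divisor: if `q * h = 0`, then `q * (h mod X^(k+1))` is a polynomial of
degree `< n + k + 1` in the ideal of `q * X^(k+1)`, which is again Weierstrass-ready, so it vanishes.
-/

open PowerSeries

def WeierstrassReady {A : Type*} [CommRing A] [IsLocalRing A]
    (f : PowerSeries A) (n : ℕ) : Prop :=
  ∃ u : (PowerSeries (IsLocalRing.ResidueField A))ˣ,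
    PowerSeries.map (IsLocalRing.residue A) f = PowerSeries.X ^ n * (u : PowerSeries _)

def SatisfiesWeierstrassDivision (A : Type*) [CommRing A] [IsLocalRing A] : Prop :=
  ∀ (f : PowerSeries A) (n : ℕ), WeierstrassReady f n →
    ∃ b : Module.Basis (Fin n) A (PowerSeries A ⧸ Ideal.span {f}),
      ∀ i : Fin n, b i = Ideal.Quotient.mk (Ideal.span {f}) (PowerSeries.X ^ (i : ℕ))

open IsLocalRing Polynomial

namespace Polynomial

variable {R : Type*} [Semiring R] {p : R[X]} {n : ℕ}

theorem Monic.eq_X_pow_of_X_pow_dvd (hp : p.Monic) (hdeg : p.natDegree = n)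
    (hdvd : Polynomial.X ^ n ∣ p) : p = Polynomial.X ^ n := by
  nontriviality R
  obtain ⟨g, rfl⟩ := hdvd
  have hg : g.Monic := (monic_X_pow n).of_mul_monic_left hp
  rw [(monic_X_pow n).natDegree_mul hg, natDegree_X_pow, add_eq_left, hg.natDegree_eq_zero]
    at hdeg
  rw [hdeg, mul_one]

theorem X_pow_dvd_coe_iff : (PowerSeries.X : R⟦X⟧) ^ n ∣ (p : R⟦X⟧) ↔ Polynomial.X ^ n ∣ p := by
  simp [X_pow_dvd_iff, PowerSeries.X_pow_dvd_iff]

end Polynomial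

namespace WeierstrassReady

variable {A : Type*} [CommRing A] [IsLocalRing A] {f : A⟦X⟧} {n : ℕ}

theorem mul_X_pow (hf : WeierstrassReady f n) (k : ℕ) :
    WeierstrassReady (f * PowerSeries.X ^ k) (n + k) := by
  obtain ⟨u, hu⟩ := hf
  exact ⟨u, by rw [map_mul, hu, map_pow, PowerSeries.map_X, pow_add]; ring⟩

theorem map_residue_eq_X_pow_of_coe_eq_mul (hf : WeierstrassReady f n) {q : A[X]} (hq : q.Monic)
    (hdeg : q.natDegree = n) {w : A⟦X⟧} (hqf : (q : A⟦X⟧) = f * w) :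
    q.map (residue A) = Polynomial.X ^ n := by
  obtain ⟨u, hu⟩ := hf
  refine (hq.map _).eq_X_pow_of_X_pow_dvd (by rw [hq.natDegree_map, hdeg]) (X_pow_dvd_coe_iff.1 ?_)
  rw [polynomial_map_coe, hqf, map_mul, hu, mul_assoc]
  exact dvd_mul_right _ _

theorem isUnit_of_coe_eq_mul (hf : WeierstrassReady f n) {q : A[X]} (hq : q.Monic)
    (hdeg : q.natDegree = n) {w : A⟦X⟧} (hqf : (q : A⟦X⟧) = f * w) : IsUnit w := by
  have hres := hf.map_residue_eq_X_pow_of_coe_eq_mul hq hdeg hqf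
  obtain ⟨u, hu⟩ := hf
  have hcancel : PowerSeries.X ^ n * ((u : (ResidueField A)⟦X⟧) * PowerSeries.map (residue A) w) =
      PowerSeries.X ^ n * 1 := by
    rw [← mul_assoc, ← hu, ← map_mul, ← hqf, ← polynomial_map_coe, hres]; simp
  have huw := mul_left_cancel₀ (pow_ne_zero n (PowerSeries.X_ne_zero (R := ResidueField A))) hcancel
  exact IsUnit.of_map (PowerSeries.map (residue A)) w (IsUnit.of_mul_eq_one_right _ huw)

end WeierstrassReady

namespace SatisfiesWeierstrassDivision

variable {A : Type*} [CommRing A] [IsLocalRing A] {f : A⟦X⟧} {n : ℕ}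

theorem bijective_mk_degreeLT (hA : SatisfiesWeierstrassDivision A) (hf : WeierstrassReady f n) :
    Function.Bijective fun p : A[X]_n => Ideal.Quotient.mk (Ideal.span {f}) (p : A⟦X⟧) := by
  obtain ⟨b, hb⟩ := hA f n hf
  suffices (fun p : A[X]_n => Ideal.Quotient.mk (Ideal.span {f}) (p : A⟦X⟧)) =
      b.equivFun.symm ∘ degreeLTEquiv A n by
    rw [this]; exact b.equivFun.symm.bijective.comp (degreeLTEquiv A n).bijective
  funext p
  conv_lhs => rw [← (degreeLTEquiv A n).symm_apply_apply p]
  simp only [degreeLTEquiv, LinearEquiv.symm_mk, LinearEquiv.coe_mk, Function.comp_apply,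
    LinearMap.coe_mk, AddHom.coe_mk, b.equivFun_symm_apply, hb]
  rw [← Polynomial.coeToPowerSeries.ringHom_apply, map_sum, map_sum]
  refine Finset.sum_congr rfl fun i _ => ?_
  rw [Polynomial.coeToPowerSeries.ringHom_apply, coe_monomial, PowerSeries.monomial_eq_C_mul_X_pow,
    ← PowerSeries.smul_eq_C_mul, ← Ideal.Quotient.mkₐ_eq_mk A, map_smul]

theorem eq_zero_of_degree_lt_of_mem_span (hA : SatisfiesWeierstrassDivision A)
    (hf : WeierstrassReady f n) {p : A[X]} (hp : p.degree < n)
    (hmem : (p : A⟦X⟧) ∈ Ideal.span {f}) : p = 0 := by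
  have h := (hA.bijective_mk_degreeLT hf).1 (a₁ := ⟨p, mem_degreeLT.2 hp⟩) (a₂ := 0)
    (by simpa [Ideal.Quotient.eq_zero_iff_mem] using hmem)
  simpa using congrArg Subtype.val h

theorem exists_monic_natDegree_eq_mem_span (hA : SatisfiesWeierstrassDivision A)
    (hf : WeierstrassReady f n) :
    ∃ q : A[X], q.Monic ∧ q.natDegree = n ∧ (q : A⟦X⟧) ∈ Ideal.span {f} := by
  obtain ⟨⟨r, hr⟩, hrX⟩ := (hA.bijective_mk_degreeLT hf).2
    (Ideal.Quotient.mk (Ideal.span {f}) (PowerSeries.X ^ n))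
  replace hr : r.degree < n := mem_degreeLT.1 hr
  refine ⟨Polynomial.X ^ n - r, monic_X_pow_sub hr, natDegree_eq_of_degree_eq_some ?_, ?_⟩
  · rw [degree_sub_eq_left_of_degree_lt (by rwa [degree_X_pow]), degree_X_pow]
  · rw [← Ideal.Quotient.eq_zero_iff_mem, Polynomial.coe_sub, map_sub, sub_eq_zero]
    simpa using hrX.symm

theorem eq_of_monic_of_mem_span (hA : SatisfiesWeierstrassDivision A) (hf : WeierstrassReady f n)
    {q q' : A[X]} (hq : q.Monic) (hq' : q'.Monic) (hdeg : q.natDegree = n)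
    (hdeg' : q'.natDegree = n) (hmem : (q : A⟦X⟧) ∈ Ideal.span {f})
    (hmem' : (q' : A⟦X⟧) ∈ Ideal.span {f}) : q = q' := by
  have hdeg_eq : q.degree = n := by rw [degree_eq_natDegree hq.ne_zero, hdeg]
  refine sub_eq_zero.1 (hA.eq_zero_of_degree_lt_of_mem_span hf ?_ ?_)
  · rw [← hdeg_eq]
    refine degree_sub_lt_left ?_ hq.ne_zero (by rw [hq.leadingCoeff, hq'.leadingCoeff])
    rw [hdeg_eq, degree_eq_natDegree hq'.ne_zero, hdeg']
  · rw [Polynomial.coe_sub]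
    exact sub_mem hmem hmem'

theorem isLeftRegular_coe (hA : SatisfiesWeierstrassDivision A) {q : A[X]} (hq : q.Monic)
    (hres : q.map (residue A) = Polynomial.X ^ n) : IsLeftRegular (q : A⟦X⟧) := by
  have hdeg : q.degree = n := by
    rw [degree_eq_natDegree hq.ne_zero, ← hq.natDegree_map (residue A), hres, natDegree_X_pow]
  have hready : WeierstrassReady (q : A⟦X⟧) n := ⟨1, by simp [← polynomial_map_coe, hres]⟩
  refine isLeftRegular_iff_right_eq_zero_of_mul.2 fun h hqh => ?_
  ext k
  have hsplit := eq_X_pow_mul_shift_add_trunc (k + 1) h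
  set T := trunc (k + 1) h
  have hmem : ((q * T : A[X]) : A⟦X⟧) ∈ Ideal.span {(q : A⟦X⟧) * PowerSeries.X ^ (k + 1)} := by
    refine Ideal.mem_span_singleton.2 ⟨-PowerSeries.mk fun i => coeff (i + (k + 1)) h, ?_⟩
    rw [Polynomial.coe_mul]
    linear_combination hqh - (q : A⟦X⟧) * hsplit
  have hdegT : (q * T).degree < ↑(n + (k + 1)) := by
    rw [mul_comm, hq.degree_mul, hdeg, show ((n + (k + 1) : ℕ) : WithBot ℕ) = (k + 1 : ℕ) + n by
      push_cast; ring]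
    exact WithBot.add_lt_add_right WithBot.coe_ne_bot (degree_trunc_lt h (k + 1))
  have hT : T = 0 := hq.isRegular.left (show q * T = q * 0 by
    rw [mul_zero]; exact hA.eq_zero_of_degree_lt_of_mem_span (hready.mul_X_pow _) hdegT hmem)
  have hk : T.coeff k = coeff k h := by simp [T, coeff_trunc]
  rw [map_zero, ← hk, hT, Polynomial.coeff_zero]

end SatisfiesWeierstrassDivision

/-- Weierstrass preparation: there is a unique pair `(q, v)` of a monic polynomial of
degree `n` and a unit `v ∈ A[[t]]ˣ` with `f = q·v`; moreover `q ≡ tⁿ` mod the maximal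
ideal. -/
theorem weierstrass_preparation {A : Type*} [CommRing A] [IsLocalRing A]
    (hA : SatisfiesWeierstrassDivision A)
    (f : PowerSeries A) (n : ℕ) (hf : WeierstrassReady f n) :
    (∃! qv : Polynomial A × (PowerSeries A)ˣ,
        qv.1.Monic ∧ qv.1.natDegree = n ∧ f = (qv.1 : PowerSeries A) * (qv.2 : PowerSeries A)) ∧
    (∀ (q : Polynomial A) (v : (PowerSeries A)ˣ),
        q.Monic → q.natDegree = n → f = (q : PowerSeries A) * (v : PowerSeries A) →
        q.map (IsLocalRing.residue A) = Polynomial.X ^ n) := by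
  have hres : ∀ (q : A[X]) (v : A⟦X⟧ˣ), q.Monic → q.natDegree = n → f = q * v →
      q.map (residue A) = Polynomial.X ^ n := fun q v hq hdeg hfv =>
    hf.map_residue_eq_X_pow_of_coe_eq_mul hq hdeg (w := ↑v⁻¹) (by simp [hfv])
  obtain ⟨q, hq, hdeg, hmem⟩ := hA.exists_monic_natDegree_eq_mem_span hf
  obtain ⟨w, hw⟩ := Ideal.mem_span_singleton.1 hmem
  have hwu := hf.isUnit_of_coe_eq_mul hq hdeg hw
  refine ⟨⟨(q, hwu.unit⁻¹), ⟨hq, hdeg, by simp [hw, mul_assoc]⟩, ?_⟩, hres⟩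
  rintro ⟨q', v'⟩ ⟨hq' : q'.Monic, hdeg' : q'.natDegree = n, hfv' : f = q' * v'⟩
  have hmem' : (q' : A⟦X⟧) ∈ Ideal.span {f} :=
    Ideal.mem_span_singleton.2 ⟨↑v'⁻¹, by rw [hfv', Units.mul_inv_cancel_right]⟩
  obtain rfl : q = q' := hA.eq_of_monic_of_mem_span hf hq hq' hdeg hdeg' hmem hmem'
  refine Prod.ext rfl (Units.ext (hA.isLeftRegular_coe hq (hres q v' hq hdeg hfv') ?_))
  change (q : A⟦X⟧) * v' = q * ↑hwu.unit⁻¹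
  rw [← hfv', hw, mul_assoc, hwu.mul_val_inv, mul_one]
end

section
/- Let B be a commutative local ring whose maximal ideal m satisfies m^r = 0 for some r, with residue field K. If x ∈ B[[t]] is a non-degenerate series (i.e. its image in K[[t]] is nonzero, equivalently a nonzero element of K((t))), then x becomes a unit in the Laurent series ring B((t)). -/
/-!
Let `n` be the order of the image of `x` in `K⟦t⟧`. Splitting off the first `n` coefficients
writes `x = t ^ n * u + p`, where the constant coefficient of `u` is a unit of `B` (it lies
outside `m`), so `u` is a unit of `B⟦t⟧`, and the polynomial `p` has all its coefficients in
the nil ideal `m`, so it is nilpotent. Since `t` is invertible in `B⸨t⸩`, `x` is there a unit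
plus a nilpotent, hence a unit.
-/

open PowerSeries

namespace LaurentSeries

theorem isUnit_ofPowerSeries_X {R : Type*} [CommSemiring R] :
    IsUnit (HahnSeries.ofPowerSeries ℤ R X) := by
  rw [HahnSeries.ofPowerSeries_X]
  refine .of_mul_eq_one (HahnSeries.single (-1 : ℤ) 1) ?_
  rw [HahnSeries.single_mul_single, add_neg_cancel, mul_one, HahnSeries.single_zero_one]

theorem isUnit_ofPowerSeries_of_isNilpotent_coeff_of_isUnit_coeff
    {R : Type*} [CommRing R] {x : R⟦X⟧} {n : ℕ}
    (hlt : ∀ k < n, IsNilpotent (coeff k x)) (hn : IsUnit (coeff n x)) :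
    IsUnit (HahnSeries.ofPowerSeries ℤ R x) := by
  have htail : IsUnit (mk fun i ↦ coeff (i + n) x) := by
    rwa [isUnit_iff_constantCoeff, ← coeff_zero_eq_constantCoeff_apply, coeff_mk, zero_add]
  have hhead : IsNilpotent (trunc n x) := by
    refine Polynomial.isNilpotent_iff.mpr fun k ↦ ?_
    rw [coeff_trunc]
    split_ifs with hk
    exacts [hlt k hk, IsNilpotent.zero]
  rw [eq_X_pow_mul_shift_add_trunc n x, map_add, map_mul, map_pow]
  exact ((hhead.map Polynomial.coeToPowerSeries.ringHom).map _).isUnit_add_left_of_commute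
    ((isUnit_ofPowerSeries_X.pow n).mul (htail.map _)) (Commute.all _ _)

end LaurentSeries

/-- If `B` is local with nilpotent maximal ideal and residue field `K`, and
`x ∈ B[[t]]` is non-degenerate (nonzero image in `K[[t]]`), then `x` becomes a unit
in the Laurent series ring `B((t))`. -/
theorem isUnit_laurentSeries_of_nondegenerate {B : Type*} [CommRing B] [IsLocalRing B]
    (r : ℕ) (hm : (IsLocalRing.maximalIdeal B) ^ r = 0)
    (x : PowerSeries B)
    (hx : PowerSeries.map (IsLocalRing.residue B) x ≠ 0) :
    IsUnit (HahnSeries.ofPowerSeries ℤ B x : LaurentSeries B) := by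
  have hnil : ∀ b ∈ IsLocalRing.maximalIdeal B, IsNilpotent b :=
    fun b hb ↦ ⟨r, by simpa [hm] using Ideal.pow_mem_pow hb r⟩
  set n := (map (IsLocalRing.residue B) x).order.toNat
  refine LaurentSeries.isUnit_ofPowerSeries_of_isNilpotent_coeff_of_isUnit_coeff (n := n)
    (fun k hk ↦ hnil _ ?_) ?_
  · rw [← IsLocalRing.residue_eq_zero_iff, ← coeff_map]
    exact coeff_of_lt_order_toNat k hk
  · rw [← IsLocalRing.residue_ne_zero_iff_isUnit, ← coeff_map]
    exact coeff_order hx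
end

section
/- Every Noetherian commutative ring is decent, i.e. the intersection ⋂_{p ∈ Spec A} ⋂_{n ∈ ℕ} pⁿ equals (0). -/
/-- A commutative ring `A` is decent if `⋂_{p ∈ Spec A} ⋂_{n} pⁿ = (0)`. -/
def IsDecent (A : Type*) [CommRing A] : Prop :=
  (⨅ (p : Ideal A) (_ : p.IsPrime) (n : ℕ), p ^ n) = ⊥

/-- Every Noetherian commutative ring is decent. -/
theorem isDecent_of_noetherian (A : Type*) [CommRing A] [IsNoetherianRing A] :
    IsDecent A := by
  rw [IsDecent, eq_bot_iff]
  intro x hx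
  simp only [Submodule.mem_iInf] at hx
  -- show the annihilator of x is the whole ring
  have hann : (Ideal.torsionOf A A x) = ⊤ := by
    by_contra h
    obtain ⟨m, hm, hle⟩ := Ideal.exists_le_maximal _ h
    have hx' : x ∈ (⨅ i : ℕ, m ^ i • ⊤ : Submodule A A) := by
      rw [Submodule.mem_iInf]
      intro i
      simpa [smul_eq_mul, Ideal.mul_top] using hx m hm.isPrime i
    obtain ⟨r, hr⟩ := (m.mem_iInf_smul_pow_eq_bot_iff x).mp hx'
    have h1 : (1 : A) - r ∈ Ideal.torsionOf A A x := by
      rw [Ideal.mem_torsionOf_iff]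
      have : (r : A) * x = x := hr
      simp [sub_mul, this]
    have := hle h1
    have : (1 : A) ∈ m := by
      have := m.add_mem this r.2
      simpa using this
    exact hm.ne_top (m.eq_top_of_isUnit_mem this isUnit_one)
  have : (1 : A) ∈ Ideal.torsionOf A A x := hann ▸ trivial
  simpa [Ideal.mem_torsionOf_iff] using this
end

section
/- Let h : Aⁿ → Aⁿ be a map given coordinatewise by polynomials with coefficients in a commutative ring A (or induced by a polynomial map ℤ[x]ⁿ → ℤ[x]ⁿ, evaluated over A[[t]]). Then the map A[[t]]ⁿ → A[[t]]ⁿ sending ν ↦ ν + t·h(ν) is bijective. -/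
/-!
The map `ν ↦ t • h(ν)` is a `t`-adic contraction: if `ν ≡ μ mod tᵏ` then `h(ν) ≡ h(μ) mod tᵏ`
since `h` is polynomial, hence `t • h(ν) ≡ t • h(μ) mod tᵏ⁺¹`. For any such contraction `F` of an
adically complete module, `ν ↦ ν + F ν` is injective, because two preimages of the same point
agree modulo every power of `t`, and surjective, because the Picard iteration `ν ↦ w - F ν`
started at `w` converges to a preimage of `w`.
-/

theorem MvPolynomial.aeval_smodEq {A S σ : Type*} [CommSemiring A] [CommRing S] [Algebra A S]
    {J : Ideal S} {ν μ : σ → S} (h : ∀ i, ν i ≡ μ i [SMOD J]) (p : MvPolynomial σ A) :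
    aeval ν p ≡ aeval μ p [SMOD J] := by
  simp only [SModEq.idealQuotientMk, ← Ideal.Quotient.mkₐ_eq_mk A, comp_aeval_apply]
  congr 2 with i
  exact h i

theorem SModEq.smul_of_mem {R M : Type*} [CommRing R] [AddCommGroup M] [Module R M]
    {I : Ideal R} {k : ℕ} {a : R} (ha : a ∈ I) {x y : M}
    (h : x ≡ y [SMOD (I ^ k • ⊤ : Submodule R M)]) :
    a • x ≡ a • y [SMOD (I ^ (k + 1) • ⊤ : Submodule R M)] := by
  rw [SModEq.sub_mem, ← smul_sub, pow_succ', Submodule.mul_smul]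
  exact Submodule.smul_mem_smul ha (SModEq.sub_mem.1 h)

section AdicContraction

variable {R M ι : Type*} [CommRing R] [AddCommGroup M] [Module R M] (I : Ideal R)

/-- Stated coordinatewise on `ι → M`, so that only `M` needs to be adically complete. -/
def IsAdicContraction (F : (ι → M) → ι → M) : Prop :=
  ∀ ⦃k : ℕ⦄ ⦃x y : ι → M⦄, (∀ i, x i ≡ y i [SMOD (I ^ k • ⊤ : Submodule R M)]) →
    ∀ i, F x i ≡ F y i [SMOD (I ^ (k + 1) • ⊤ : Submodule R M)]

variable {I} {F : (ι → M) → ι → M}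

theorem IsAdicContraction.injective_id_add [IsHausdorff I M] (hF : IsAdicContraction I F) :
    Function.Injective fun x => x + F x := by
  intro x y hxy
  have hclose : ∀ k i, x i ≡ y i [SMOD (I ^ k • ⊤ : Submodule R M)] := by
    intro k
    induction k with
    | zero => simp
    | succ k ih =>
      intro i
      have hsum : (x + F x) i ≡ (y + F y) i [SMOD (I ^ (k + 1) • ⊤ : Submodule R M)] := by
        rw [show x + F x = y + F y from hxy]
      simpa using hsum.sub (hF ih i)
  exact funext fun i => IsHausdorff.eq_iff_smodEq.2 fun k => hclose k i

theorem IsAdicContraction.surjective_id_add [IsAdicComplete I M] (hF : IsAdicContraction I F) :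
    Function.Surjective fun x => x + F x := by
  intro w
  set seq : ℕ → ι → M := fun k => (fun x => w - F x)^[k] w
  have seq_succ (k : ℕ) (i : ι) : seq (k + 1) i = w i - F (seq k) i :=
    congrFun (Function.iterate_succ_apply' ..) i
  have seq_cauchy : ∀ k i, seq k i ≡ seq (k + 1) i [SMOD (I ^ k • ⊤ : Submodule R M)] := by
    intro k
    induction k with
    | zero => simp
    | succ k ih =>
      intro i
      rw [seq_succ (k + 1) i, seq_succ k i]
      exact (SModEq.refl (w i)).sub (hF ih i)
  choose L hL using fun i => IsPrecomplete.prec (I := I) inferInstance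
    ((AdicCompletion.isAdicCauchy_iff I M (seq · i)).2 fun k => seq_cauchy k i)
  refine ⟨L, funext fun i => (IsHausdorff.eq_iff_smodEq (I := I)).2 fun k => ?_⟩
  show L i + F L i ≡ w i [SMOD (I ^ k • ⊤ : Submodule R M)]
  have hle := Submodule.pow_smul_top_le I M k.le_succ
  have hL_succ := (hL i (k + 1)).mono hle
  have hFL := (hF (fun j => hL j k) i).mono hle
  rw [seq_succ] at hL_succ
  simpa using (hL_succ.add hFL).symm

theorem IsAdicContraction.bijective_id_add [IsAdicComplete I M] (hF : IsAdicContraction I F) :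
    Function.Bijective fun x => x + F x :=
  ⟨hF.injective_id_add, hF.surjective_id_add⟩

end AdicContraction

theorem isAdicContraction_mul_aeval {A S ι : Type*} [CommSemiring A] [CommRing S] [Algebra A S]
    {I : Ideal S} {a : S} (ha : a ∈ I) (h : ι → MvPolynomial ι A) :
    IsAdicContraction I (fun (ν : ι → S) i => a * MvPolynomial.aeval ν (h i)) :=
  fun _ _ _ hνμ i => (MvPolynomial.aeval_smodEq hνμ (h i)).smul_of_mem ha

/-- If `h : Aⁿ → Aⁿ` is given coordinatewise by polynomials, then
`ν ↦ ν + t·h(ν)` is a bijection of `A[[t]]ⁿ`. -/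
theorem bijective_add_t_mul_polynomial_map {A : Type*} [CommRing A] (n : ℕ)
    (h : Fin n → MvPolynomial (Fin n) A) :
    Function.Bijective (fun ν : Fin n → PowerSeries A =>
      fun i : Fin n => ν i + PowerSeries.X * MvPolynomial.aeval ν (h i)) :=
  (isAdicContraction_mul_aeval (Ideal.mem_span_singleton_self PowerSeries.X) h).bijective_id_add
end

section
/- Let A be a commutative local ring satisfying Weierstrass division, and suppose r = b·f ∈ A[t] is a polynomial of degree at most n−1, where f ∈ A[[t]] reduces mod the maximal ideal to tⁿ·u(t) with u a unit in k[[t]] and b ∈ A[[t]]. If additionally the maximal ideal m of A satisfies ⋂_N m^N·A[[t]] = 0 (e.g. A ∈ Inf_k), then b = 0 and r = 0. -/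
/-!
The coefficient of `tⁿ` in `f` is a unit and the lower ones lie in `m`, while the coefficients
of `tⁿ⁺ᵏ` in `b * f = r` vanish because `deg r < n`. Solving that coefficient equation for
`bₖ` shows, by induction on `k`, that if all coefficients of `b` lie in an ideal `J` then they
lie in `J * m`. Hence they lie in every `m ^ N`, so `b = 0` by separatedness, and then `r = 0`.
-/

open PowerSeries

namespace PowerSeries

open Finset

variable {R : Type*} [CommRing R] {I J : Ideal R} {f b : R⟦X⟧} {n : ℕ}

/- Every term of `coeff (n + k) (b * f)` other than `bₖ fₙ` has either a `b`-index `i < k`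
(induction) or an `f`-index `j < n`. -/
theorem coeff_mem_mul_of_coeff_add_mul_eq_zero (hlow : ∀ j < n, coeff j f ∈ I)
    (hunit : IsUnit (coeff n f)) (hbf : ∀ k, coeff (n + k) (b * f) = 0)
    (hb : ∀ k, coeff k b ∈ J) (k : ℕ) : coeff k b ∈ J * I := by
  induction k using Nat.strong_induction_on with
  | _ k ih =>
    have hkn : (k, n) ∈ antidiagonal (n + k) := by simp [add_comm]
    have hsplit := Finset.add_sum_erase _ (fun p : ℕ × ℕ => coeff p.1 b * coeff p.2 f) hkn
    rw [← coeff_mul, hbf, add_eq_zero_iff_eq_neg] at hsplit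
    rw [← Ideal.mul_unit_mem_iff_mem _ hunit, hsplit]
    refine neg_mem (Ideal.sum_mem _ fun p hp => ?_)
    obtain ⟨hne, hsum⟩ := Finset.mem_erase.1 hp
    rw [HasAntidiagonal.mem_antidiagonal] at hsum
    rcases lt_or_ge p.1 k with hlt | hge
    · exact Ideal.mul_mem_right _ _ (ih _ hlt)
    · have hj : p.2 < n := by
        have : p.1 ≠ k := fun h => hne (Prod.ext h (by omega))
        omega
      exact Ideal.mul_mem_mul (hb _) (hlow _ hj)

theorem coeff_mem_pow_of_coeff_add_mul_eq_zero (hlow : ∀ j < n, coeff j f ∈ I)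
    (hunit : IsUnit (coeff n f)) (hbf : ∀ k, coeff (n + k) (b * f) = 0) (N k : ℕ) :
    coeff k b ∈ I ^ N := by
  induction N generalizing k with
  | zero => simp
  | succ N ih =>
    rw [pow_succ]
    exact coeff_mem_mul_of_coeff_add_mul_eq_zero hlow hunit hbf ih k

theorem eq_zero_of_forall_mem_pow (hsep : ⨅ N : ℕ, Ideal.map (C (R := R)) (I ^ N) = ⊥)
    {a : R} (ha : ∀ N, a ∈ I ^ N) : a = 0 := by
  have hC : C a ∈ ⨅ N : ℕ, Ideal.map (C (R := R)) (I ^ N) :=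
    Submodule.mem_iInf _ |>.2 fun N => Ideal.mem_map_of_mem _ (ha N)
  rw [hsep, Ideal.mem_bot, map_eq_zero_iff _ C_injective] at hC
  exact hC

end PowerSeries

namespace WeierstrassReady

open IsLocalRing

variable {A : Type*} [CommRing A] [IsLocalRing A] {f : A⟦X⟧} {n : ℕ}

theorem residue_coeff (hf : WeierstrassReady f n) :
    ∃ u : (ResidueField A)⟦X⟧ˣ, ∀ j,
      residue A (coeff j f) = if n ≤ j then coeff (j - n) (u : (ResidueField A)⟦X⟧) else 0 := by
  obtain ⟨u, hu⟩ := hf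
  exact ⟨u, fun j => by rw [← coeff_map, hu, coeff_X_pow_mul']⟩

theorem isUnit_coeff (hf : WeierstrassReady f n) : IsUnit (coeff n f) := by
  obtain ⟨u, hu⟩ := hf.residue_coeff
  rw [← residue_ne_zero_iff_isUnit, hu, if_pos le_rfl, Nat.sub_self, coeff_zero_eq_constantCoeff]
  exact (isUnit_constantCoeff _ u.isUnit).ne_zero

theorem coeff_mem_maximalIdeal (hf : WeierstrassReady f n) {j : ℕ} (hj : j < n) :
    coeff j f ∈ maximalIdeal A := by
  obtain ⟨u, hu⟩ := hf.residue_coeff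
  rw [← residue_eq_zero_iff, hu, if_neg (Nat.not_le.2 hj)]

end WeierstrassReady

theorem eq_zero_of_poly_mul_weierstrass_general {A : Type*} [CommRing A] [IsLocalRing A]
    (f : PowerSeries A) (n : ℕ) (hf : WeierstrassReady f n)
    (b : PowerSeries A) (r : Polynomial A)
    (hr : r.degree < n) (hbf : (r : PowerSeries A) = b * f)
    (hcap : (⨅ N : ℕ, Ideal.map (PowerSeries.C (R := A))
        ((IsLocalRing.maximalIdeal A) ^ N)) = ⊥) :
    b = 0 ∧ r = 0 := by
  have hhigh : ∀ k, coeff (n + k) (b * f) = 0 := fun k => by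
    rw [← hbf, Polynomial.coeff_coe]
    exact Polynomial.coeff_eq_zero_of_degree_lt (hr.trans_le (by exact_mod_cast n.le_add_right k))
  have hb : b = 0 := ext fun k => eq_zero_of_forall_mem_pow hcap fun N =>
    coeff_mem_pow_of_coeff_add_mul_eq_zero (fun _ => hf.coeff_mem_maximalIdeal)
      hf.isUnit_coeff hhigh N k
  refine ⟨hb, Polynomial.coe_eq_zero_iff.1 ?_⟩
  rw [hbf, hb, zero_mul]

/-- If `A` is local satisfying Weierstrass division, `f` reduces to `tⁿ·(unit)`,
`r = b·f` is a polynomial of degree at most `n - 1`, and `⋂_N m^N·A[[t]] = 0`, then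
`b = 0` and `r = 0`. -/
theorem eq_zero_of_poly_mul_weierstrass {A : Type*} [CommRing A] [IsLocalRing A]
    (hA : SatisfiesWeierstrassDivision A)
    (f : PowerSeries A) (n : ℕ) (hf : WeierstrassReady f n)
    (b : PowerSeries A) (r : Polynomial A)
    (hr : r.degree < n) (hbf : (r : PowerSeries A) = b * f)
    (hcap : (⨅ N : ℕ, Ideal.map (PowerSeries.C (R := A))
        ((IsLocalRing.maximalIdeal A) ^ N)) = ⊥) :
    b = 0 ∧ r = 0 :=
  eq_zero_of_poly_mul_weierstrass_general f n hf b r hr hbf hcap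
end

section
/- Let k be a field and consider the cone X = {(x,y,z) : xy = z²}. For any ring A in Inf_k (local k-algebra with residue field k and nilpotent maximal ideal m_A) and any arc γ(t) = (x(t), y(t), z(t)) ∈ X(A[[t]]) deforming γ₀(t) = (t², 0, 0) (i.e. reducing to γ₀ modulo m_A), writing by Weierstrass preparation x(t) = q(t)·u(t) with q(t) = a + b·t + t² monic of degree 2, a, b ∈ m_A, u ∈ A[[t]]ˣ, and z(t) = v + w·t + q(t)·h(t) with v, w ∈ A, the elements (a, b, v, w) satisfy the equations a·w² = v² and b·w² = 2·w·v in A. -/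
/-!
Substituting both factorisations into `x·y = z²` gives `q·g = (v + w·t)²`, where
`q = a + b·t + t²` and `g = u·y - 2·(v + w·t)·h - q·h²`. For `n ≥ 0` the coefficient of
`t^(n+3)` yields the recurrence `a·g_(n+3) + b·g_(n+2) + g_(n+1) = 0`; as `a, b` lie in the
nilpotent maximal ideal, every `g_(n+1)` lies in all its powers and so vanishes. Hence `g` is a
constant `c`, and `q·c = (v + w·t)²` reads `a·c = v²`, `b·c = 2·v·w`, `c = w²`.
-/

open PowerSeries

theorem Ideal.eq_zero_of_recurrence {R : Type*} [CommRing R] {I : Ideal R} {N : ℕ}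
    (hI : I ^ N = 0) {a b : R} (ha : a ∈ I) (hb : b ∈ I) {G : ℕ → R}
    (hG : ∀ n, a * G (n + 2) + b * G (n + 1) + G n = 0) (n : ℕ) : G n = 0 := by
  have hmem : ∀ j n, G n ∈ I ^ j := by
    intro j
    induction j with
    | zero => simp
    | succ j ih =>
      intro n
      rw [show G n = -(a * G (n + 2)) - b * G (n + 1) by linear_combination hG n, pow_succ']
      exact sub_mem (neg_mem (Ideal.mul_mem_mul ha (ih _))) (Ideal.mul_mem_mul hb (ih _))
  simpa [hI] using hmem N n

namespace PowerSeries

variable {R : Type*} [CommRing R]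

theorem coeff_add_two_quadratic_mul (a b : R) (g : R⟦X⟧) (n : ℕ) :
    coeff (n + 2) ((C a + C b * X + X ^ 2) * g) =
      a * coeff (n + 2) g + b * coeff (n + 1) g + coeff n g := by
  simp only [add_mul, map_add, coeff_C_mul, mul_assoc, coeff_succ_X_mul, coeff_X_pow_mul]

theorem coeff_add_three_quadratic (a b c : R) (n : ℕ) :
    coeff (n + 3) (C a + C b * X + C c * X ^ 2) = 0 := by
  simp [coeff_X_pow]

theorem eq_of_quadratic_eq {a b c a' b' c' : R}
    (h : C a + C b * X + C c * X ^ 2 = C a' + C b' * X + C c' * X ^ 2) :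
    a = a' ∧ b = b' ∧ c = c' := by
  refine ⟨?_, ?_, ?_⟩
  · simpa using congrArg (coeff 0) h
  · simpa [coeff_X, coeff_X_pow] using congrArg (coeff 1) h
  · simpa [coeff_X, coeff_X_pow] using congrArg (coeff 2) h

theorem eq_C_of_quadratic_mul_eq {I : Ideal R} {N : ℕ} (hI : I ^ N = 0) {a b : R}
    (ha : a ∈ I) (hb : b ∈ I) {g : R⟦X⟧} {α β γ : R}
    (h : (C a + C b * X + X ^ 2) * g = C α + C β * X + C γ * X ^ 2) :
    g = C (coeff 0 g) := by
  ext (_ | n)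
  · simp
  · rw [coeff_C, if_neg n.succ_ne_zero]
    refine Ideal.eq_zero_of_recurrence hI ha hb (G := fun n ↦ coeff (n + 1) g) (fun n ↦ ?_) n
    have hn := congrArg (coeff (n + 3)) h
    rwa [coeff_add_three_quadratic, show n + 3 = n + 1 + 2 from rfl,
      coeff_add_two_quadratic_mul] at hn

theorem sq_coeffs_of_quadratic_mul_eq_sq {I : Ideal R} {N : ℕ} (hI : I ^ N = 0) {a b : R}
    (ha : a ∈ I) (hb : b ∈ I) {g : R⟦X⟧} {v w : R}
    (h : (C a + C b * X + X ^ 2) * g = (C v + C w * X) ^ 2) :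
    a * w ^ 2 = v ^ 2 ∧ b * w ^ 2 = 2 * w * v := by
  have hsq : (C v + C w * X) ^ 2 = C (v ^ 2) + C (2 * v * w) * X + C (w ^ 2) * X ^ 2 := by
    simp only [map_mul, map_pow, map_ofNat]
    ring
  rw [hsq] at h
  set c := coeff 0 g
  have hc : C (a * c) + C (b * c) * X + C c * X ^ 2 =
      C (v ^ 2) + C (2 * v * w) * X + C (w ^ 2) * X ^ 2 := by
    rw [← h, eq_C_of_quadratic_mul_eq hI ha hb h]
    simp only [map_mul]
    ring
  obtain ⟨h0, h1, hc⟩ := eq_of_quadratic_eq hc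
  rw [hc] at h0 h1
  exact ⟨h0, by linear_combination h1⟩

end PowerSeries

theorem cone_arc_finite_model_equations_general
    {A : Type*} [CommRing A] [IsLocalRing A]
    (m : ℕ) (hm : (IsLocalRing.maximalIdeal A) ^ m = 0)
    (x y z : PowerSeries A)
    (harc : x * y = z ^ 2)
    (a b : A) (ha : a ∈ IsLocalRing.maximalIdeal A) (hb : b ∈ IsLocalRing.maximalIdeal A)
    (u : (PowerSeries A)ˣ)
    (hxfact : x = (PowerSeries.C a + PowerSeries.C b * PowerSeries.X
      + PowerSeries.X ^ 2) * (u : PowerSeries A))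
    (v w : A) (h : PowerSeries A)
    (hzfact : z = PowerSeries.C v + PowerSeries.C w * PowerSeries.X
      + (PowerSeries.C a + PowerSeries.C b * PowerSeries.X + PowerSeries.X ^ 2) * h) :
    a * w ^ 2 = v ^ 2 ∧ b * w ^ 2 = 2 * w * v := by
  set q := C a + C b * X + X ^ 2
  set r := C v + C w * X
  refine sq_coeffs_of_quadratic_mul_eq_sq hm ha hb (g := u * y - (2 * r * h + q * h ^ 2)) ?_
  subst hxfact hzfact
  linear_combination harc

/-- Let `k` be a field and `A` a local `k`-algebra with nilpotent maximal ideal and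
residue field `k`.  Let `(x(t), y(t), z(t))` be an arc on the cone `xy = z²`
deforming `γ₀(t) = (t², 0, 0)`.  Writing (by Weierstrass preparation)
`x(t) = (a + b·t + t²)·u(t)` with `a, b` in the maximal ideal and `u` a unit, and
`z(t) = v + w·t + (a + b·t + t²)·h(t)`, the elements `(a, b, v, w)` satisfy
`a·w² = v²` and `b·w² = 2·w·v`. -/
theorem cone_arc_finite_model_equations {k : Type*} [Field k]
    {A : Type*} [CommRing A] [IsLocalRing A] [Algebra k A]
    (m : ℕ) (hm : (IsLocalRing.maximalIdeal A) ^ m = 0)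
    (hres : Function.Bijective ((IsLocalRing.residue A).comp (algebraMap k A)))
    (x y z : PowerSeries A)
    (harc : x * y = z ^ 2)
    (hx0 : PowerSeries.map (IsLocalRing.residue A) x = PowerSeries.X ^ 2)
    (hy0 : PowerSeries.map (IsLocalRing.residue A) y = 0)
    (hz0 : PowerSeries.map (IsLocalRing.residue A) z = 0)
    (a b : A) (ha : a ∈ IsLocalRing.maximalIdeal A) (hb : b ∈ IsLocalRing.maximalIdeal A)
    (u : (PowerSeries A)ˣ)
    (hxfact : x = (PowerSeries.C a + PowerSeries.C b * PowerSeries.X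
      + PowerSeries.X ^ 2) * (u : PowerSeries A))
    (v w : A) (h : PowerSeries A)
    (hzfact : z = PowerSeries.C v + PowerSeries.C w * PowerSeries.X
      + (PowerSeries.C a + PowerSeries.C b * PowerSeries.X + PowerSeries.X ^ 2) * h) :
    a * w ^ 2 = v ^ 2 ∧ b * w ^ 2 = 2 * w * v :=
  cone_arc_finite_model_equations_general m hm x y z harc a b ha hb u hxfact v w h hzfact
end

section
/- Let B = ⋃_{n≥1} k[[t^{1/n}]] (the ring of Puiseux-type integral power series over a field k). Then the quotient ring B/tB is not decent: there exists a nonzero element x ∈ B/tB lying in ⋂_{p ∈ Spec(B/tB)} ⋂_{n ∈ ℕ} pⁿ. For example, the class of t^{1/2} is such an element. -/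
set_option synthInstance.maxHeartbeats 1000000
set_option maxHeartbeats 1000000

/-- The ring `B = ⋃_{n ≥ 1} k[[t^{1/n}]]` of Puiseux-type integral power series,
realized as the subring of Hahn series over `ℚ` whose support consists of
nonnegative rationals with denominator dividing some fixed `n`. -/
noncomputable def PuiseuxInt (k : Type*) [Field k] : Subring (HahnSeries ℚ k) where
  carrier := {x | ∃ n : ℕ, 0 < n ∧ ∀ q ∈ x.support, 0 ≤ q ∧ ∃ m : ℕ, q = (m : ℚ) / n}
  mul_mem' := by
    rintro x y ⟨n₁, hn₁, hx⟩ ⟨n₂, hn₂, hy⟩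
    refine ⟨n₁ * n₂, Nat.mul_pos hn₁ hn₂, fun q hq => ?_⟩
    rcases HahnSeries.support_mul_subset hq with ⟨q₁, hq₁, q₂, hq₂, rfl⟩
    obtain ⟨h₁, m₁, rfl⟩ := hx q₁ hq₁
    obtain ⟨h₂, m₂, rfl⟩ := hy q₂ hq₂
    refine ⟨by positivity, m₁ * n₂ + m₂ * n₁, ?_⟩
    push_cast
    field_simp
  one_mem' := by
    refine ⟨1, one_pos, fun q hq => ?_⟩
    have h0 : q = 0 := by
      have h1 : (1 : HahnSeries ℚ k) = HahnSeries.single (0 : ℚ) (1 : k) :=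
        (HahnSeries.single_zero_one).symm
      rw [h1] at hq
      simpa using HahnSeries.support_single_subset hq
    exact ⟨le_of_eq h0.symm, 0, by simp [h0]⟩
  add_mem' := by
    rintro x y ⟨n₁, hn₁, hx⟩ ⟨n₂, hn₂, hy⟩
    refine ⟨n₁ * n₂, Nat.mul_pos hn₁ hn₂, fun q hq => ?_⟩
    rcases (HahnSeries.support_add_subset x y hq : q ∈ x.support ∪ y.support) with h | h
    · obtain ⟨h₁, m₁, rfl⟩ := hx q h
      exact ⟨h₁, m₁ * n₂, by push_cast; field_simp⟩
    · obtain ⟨h₂, m₂, rfl⟩ := hy q h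
      exact ⟨h₂, m₂ * n₁, by push_cast; field_simp⟩
  zero_mem' := ⟨1, one_pos, by simp⟩
  neg_mem' := by
    rintro x ⟨n, hn, hx⟩
    exact ⟨n, hn, fun q hq => hx q (by simpa using hq)⟩
  
/-- `t = t^{1/1}` as an element of `B`. -/
noncomputable def puiseuxT (k : Type*) [Field k] : PuiseuxInt k :=
  ⟨HahnSeries.single (1 : ℚ) (1 : k), ⟨1, one_pos, fun q hq => by
    have : q = 1 := HahnSeries.support_single_subset hq
    exact ⟨by simp [this], 1, by simp [this]⟩⟩⟩

/-- `t^{1/2}` as an element of `B`. -/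
noncomputable def puiseuxSqrtT (k : Type*) [Field k] : PuiseuxInt k :=
  ⟨HahnSeries.single (1/2 : ℚ) (1 : k), ⟨2, two_pos, fun q hq => by
    have : q = 1/2 := HahnSeries.support_single_subset hq
    exact ⟨by simp [this], 1, by simp [this]⟩⟩⟩

/-! For every `n > 0`, `t^{1/2} = (t^{1/(2n)})^n`, and `t^{1/(2n)}` is nilpotent modulo `t`; since
nilpotents lie in every prime `p`, the class of `t^{1/2}` lies in every `pⁿ`. It is nonzero because
a multiple of `t` in `B` has no coefficient below degree `1`. -/

theorem Ideal.IsPrime.mem_pow_of_isNilpotent_roots {R : Type*} [CommRing R]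
    {x : R} (hx : ∀ n, 0 < n → ∃ y : R, IsNilpotent y ∧ y ^ n = x)
    {p : Ideal R} (hp : p.IsPrime) (n : ℕ) : x ∈ p ^ n := by
  rcases Nat.eq_zero_or_pos n with rfl | hn
  · simp
  obtain ⟨y, hy, rfl⟩ := hx n hn
  exact Ideal.pow_mem_pow (nilradical_le_prime p hy) n

namespace PuiseuxInt

variable {k : Type*} [Field k]

theorem single_mem (q : ℚ≥0) (a : k) : HahnSeries.single (q : ℚ) a ∈ PuiseuxInt k := by
  refine ⟨q.den, q.den_pos, fun r hr => ?_⟩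
  obtain rfl : r = q := HahnSeries.support_single_subset hr
  exact ⟨q.coe_nonneg, q.num, NNRat.cast_def q⟩

theorem coeff_eq_zero_of_neg {x : HahnSeries ℚ k} (hx : x ∈ PuiseuxInt k) {q : ℚ}
    (hq : q < 0) : x.coeff q = 0 := by
  obtain ⟨_, -, hsupp⟩ := hx
  by_contra h
  exact hq.not_ge (hsupp q h).1

variable (k)

noncomputable def monomial (q : ℚ≥0) : PuiseuxInt k :=
  ⟨HahnSeries.single (q : ℚ) 1, single_mem q 1⟩

theorem monomial_add (q r : ℚ≥0) : monomial k (q + r) = monomial k q * monomial k r :=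
  Subtype.ext (by simp [monomial, HahnSeries.single_mul_single])

theorem monomial_pow (q : ℚ≥0) (n : ℕ) : monomial k q ^ n = monomial k (n • q) :=
  Subtype.ext (by simp [monomial, HahnSeries.single_pow])

theorem monomial_notMem_span_monomial {q r : ℚ≥0} (hqr : q < r) :
    monomial k q ∉ Ideal.span {monomial k r} := by
  intro h
  obtain ⟨⟨y, hy⟩, hyr⟩ := Ideal.mem_span_singleton'.mp h
  have hcoeff := congrArg (fun z : PuiseuxInt k => z.1.coeff ((q - r : ℚ) + r)) hyr
  simp only [monomial, Subring.coe_mul, HahnSeries.coeff_mul_single_add] at hcoeff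
  simp [coeff_eq_zero_of_neg hy (sub_neg.mpr (NNRat.coe_lt_coe.mpr hqr))] at hcoeff

theorem isNilpotent_mk_monomial {q : ℚ≥0} (hq : 0 < q) (r : ℚ≥0) :
    IsNilpotent (Ideal.Quotient.mk (Ideal.span {monomial k r}) (monomial k q)) := by
  obtain ⟨n, hn⟩ := Archimedean.arch r hq
  refine ⟨n, ?_⟩
  rw [← map_pow, Ideal.Quotient.eq_zero_iff_mem, monomial_pow, ← add_tsub_cancel_of_le hn,
    monomial_add]
  exact Ideal.mul_mem_right _ _ (Ideal.mem_span_singleton_self _)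

end PuiseuxInt

open PuiseuxInt in
/-- `B/tB` is not decent: the class of `t^{1/2}` is a nonzero element lying in
`⋂_{p ∈ Spec(B/tB)} ⋂_{n} pⁿ`. -/
theorem puiseux_quotient_not_decent (k : Type*) [Field k] :
    (Ideal.Quotient.mk (Ideal.span {puiseuxT k}) (puiseuxSqrtT k) ≠ 0) ∧
    (∀ (p : Ideal ((PuiseuxInt k) ⧸ Ideal.span {puiseuxT k})), p.IsPrime → ∀ n : ℕ,
      Ideal.Quotient.mk (Ideal.span {puiseuxT k}) (puiseuxSqrtT k) ∈ p ^ n) := by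
  have ht : puiseuxT k = monomial k 1 := Subtype.ext (by simp [puiseuxT, monomial])
  have hs : puiseuxSqrtT k = monomial k (1 / 2) := Subtype.ext (by simp [puiseuxSqrtT, monomial])
  rw [ht, hs]
  refine ⟨?_, fun p hp => hp.mem_pow_of_isNilpotent_roots fun n hn => ?_⟩
  · rw [Ne, Ideal.Quotient.eq_zero_iff_mem]
    exact monomial_notMem_span_monomial k (by norm_num)
  · refine ⟨_, isNilpotent_mk_monomial k (q := 1 / (2 * n)) (by positivity) 1, ?_⟩
    rw [← map_pow, monomial_pow, nsmul_eq_mul]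
    congr 2
    field_simp
end
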